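/- Let f: S¹ → S¹ be a transitive orientation-preserving non-invertible local homeomorphism of the circle with increasing lift F, and let f_t be the circle map lifted by F_t(x) = F(x)+t. Then for every ε > 0 and x ∈ S¹ there exist n ∈ ℕ and 0 < t < ε such that f_t^n(x) = x. -/

import Mathlib

/-!
Let `U` be a nonempty open set of the circle. The union `V` of its forward images `fⁿ(U)` is open
and forward invariant, so the points whose forward orbit avoids `V` form a closed set `A` with
`f⁻¹(A) = A`, nonempty by compactness as soon as `V` misses a point. Such an `A` is the whole
circle. Otherwise lift it to `ℝ` and record each gap of the lift by its left end: `F` maps gaps onto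
gaps, and the dense orbit of `y` enters every gap, so modulo `ℤ` every gap is an image of the gap
of `y`. The gaps over `y` and over `y + 1` are both preimages of the gap of `y` lying in its own
orbit, so they agree modulo `ℤ`, say up to `k`; applying `F` gives `k * d = 1`, impossible for
`d ≥ 2`. Hence some `fⁿ(U)` contains `x`; for `U` the image of `(F x, F x + ε)` this gives `z` in
that interval with `Fⁿ(z) ≡ x`, and since `F_0ⁿ⁺¹(x) = Fⁿ(F x) < Fⁿ(z) < Fⁿ(F x + ε) ≤ F_εⁿ⁺¹(x)`,
the intermediate value theorem yields `t ∈ (0, ε)` with `F_tⁿ⁺¹(x) = Fⁿ(z)`.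
-/

open Set Function

theorem UnitAddCircle.coe_add_int (x : ℝ) (k : ℤ) : ((x + k : ℝ) : UnitAddCircle) = x := by
  rw [QuotientAddGroup.mk_add, add_eq_left, AddCircle.coe_eq_zero_iff]
  exact ⟨k, by simp⟩

theorem UnitAddCircle.coe_eq_coe_iff {x y : ℝ} :
    (x : UnitAddCircle) = y ↔ ∃ k : ℤ, y = x + k := by
  refine ⟨fun h => ?_, fun ⟨k, hk⟩ => hk ▸ (coe_add_int x k).symm⟩
  obtain ⟨k, hk⟩ := (AddCircle.coe_eq_zero_iff 1).1 (by rw [QuotientAddGroup.mk_sub, h, sub_self] :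
    ((y - x : ℝ) : UnitAddCircle) = 0)
  exact ⟨k, by simp at hk; linarith⟩

theorem map_add_int_of_map_add_one {F : ℝ → ℝ} {d : ℝ} (hdeg : ∀ x, F (x + 1) = F x + d)
    (x : ℝ) (k : ℤ) : F (x + k) = F x + k * d := by
  simpa [zsmul_eq_mul] using AddConstMapClass.map_add_int' (⟨F, hdeg⟩ : AddConstMap ℝ ℝ 1 d) x k

theorem surjective_of_map_add_one {F : ℝ → ℝ} {d : ℝ} (hFc : Continuous F)
    (hdeg : ∀ x, F (x + 1) = F x + d) (hd : 0 < d) : Surjective F := by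
  intro y
  obtain ⟨n, hn⟩ := exists_nat_ge (|y - F 0| / d)
  have hnd : |y - F 0| ≤ n * d := (div_le_iff₀ hd).1 hn
  have hF (k : ℤ) : F k = F 0 + k * d := by simpa using map_add_int_of_map_add_one hdeg 0 k
  refine mem_range_of_exists_le_of_exists_ge hFc ⟨((-n : ℤ) : ℝ), ?_⟩ ⟨((n : ℤ) : ℝ), ?_⟩ <;>
    rw [hF] <;> push_cast <;> linarith [le_abs_self (y - F 0), neg_abs_le (y - F 0)]

theorem IsOpenMap.iterate {X : Type*} [TopologicalSpace X] {f : X → X} (hf : IsOpenMap f) :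
    ∀ n, IsOpenMap f^[n]
  | 0 => IsOpenMap.id
  | n + 1 => (hf.iterate n).comp hf

theorem Function.eq_of_iterate_eq_of_map_eq {α : Type*} {f : α → α} {p q q' : α} {a b : ℕ}
    (hq : f^[a] p = q) (hq' : f^[b] p = q') (hfq : f q = p) (hfq' : f q' = p) : q = q' := by
  have ha : f^[a + 1] p = p := by rw [iterate_succ_apply', hq, hfq]
  have hb : f^[b + 1] p = p := by rw [iterate_succ_apply', hq', hfq']
  rw [← hq, ← hq']
  calc f^[a] p = f^[a] (f^[b + 1] p) := by rw [hb]
    _ = f^[b] (f^[a + 1] p) := by rw [← iterate_add_apply, ← iterate_add_apply, add_left_comm]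
    _ = f^[b] p := by rw [ha]

theorem iUnion_image_iterate_eq_univ {X : Type*} [TopologicalSpace X] [CompactSpace X]
    {f : X → X} (hfc : Continuous f) (hfo : IsOpenMap f) (hfs : Surjective f)
    (hf : ∀ A : Set X, IsClosed A → A.Nonempty → f ⁻¹' A = A → A = univ)
    {U : Set X} (hU : IsOpen U) (hUne : U.Nonempty) : ⋃ n, f^[n] '' U = univ := by
  set V := ⋃ n, f^[n] '' U
  have hVf : MapsTo f V V := by
    rintro _ ⟨_, ⟨n, rfl⟩, p, hp, rfl⟩
    exact mem_iUnion.2 ⟨n + 1, p, hp, iterate_succ_apply' f n p⟩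
  by_contra hV
  obtain ⟨x, hx⟩ := (ne_univ_iff_exists_notMem V).1 hV
  set A := ⋂ n, f^[n] ⁻¹' Vᶜ
  have hK (n : ℕ) : IsClosed (f^[n] ⁻¹' Vᶜ) :=
    (isOpen_iUnion fun m => (hfo.iterate m) U hU).isClosed_compl.preimage (hfc.iterate n)
  have hAne : A.Nonempty := by
    refine IsCompact.nonempty_iInter_of_sequence_nonempty_isCompact_isClosed _
      (fun n p hp => ?_) (fun n => ?_) (hK 0).isCompact hK
    · exact fun hpV => hp (by rw [iterate_succ_apply']; exact hVf hpV)
    · obtain ⟨p, hp⟩ := hfs.iterate n x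
      exact ⟨p, by rwa [mem_preimage, hp]⟩
  have hAinv : f ⁻¹' A = A := by
    ext p
    simp only [A, mem_preimage, mem_iInter, ← iterate_succ_apply]
    exact ⟨fun h => Nat.rec (fun hpV => h 0 (hVf hpV)) (fun n _ => h n), fun h n => h (n + 1)⟩
  obtain ⟨u, hu⟩ := hUne
  have huV : u ∈ V := mem_iUnion.2 ⟨0, u, hu, rfl⟩
  have huA : u ∈ A := (hf A (isClosed_iInter hK) hAne hAinv).symm ▸ mem_univ u
  exact mem_iInter.1 huA 0 huV

section Semiconj

variable {X Y : Type*} {π : X → Y} {F : X → X} {f : Y → Y}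

theorem Function.Semiconj.surjective_right (h : Semiconj π F f) (hπ : Surjective π)
    (hF : Surjective F) : Surjective f := by
  intro q
  obtain ⟨w, rfl⟩ := hπ q
  obtain ⟨v, rfl⟩ := hF w
  exact ⟨π v, (h v).symm⟩

variable [TopologicalSpace X] [TopologicalSpace Y]

theorem Function.Semiconj.continuous_right (h : Semiconj π F f) (hπ : Topology.IsQuotientMap π)
    (hF : Continuous F) : Continuous f :=
  hπ.continuous_iff.2 (h.comp_eq ▸ hπ.continuous.comp hF)

theorem Function.Semiconj.isOpenMap_right (h : Semiconj π F f) (hπs : Surjective π)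
    (hπc : Continuous π) (hπo : IsOpenMap π) (hF : IsOpenMap F) : IsOpenMap f := by
  intro O hO
  have : f '' O = π '' (F '' (π ⁻¹' O)) := by
    conv_lhs => rw [← image_preimage_eq O hπs]
    rw [image_image, image_image]
    exact image_congr fun x _ => (h x).symm
  exact this ▸ hπo _ (hF _ (hO.preimage hπc))

end Semiconj

/-- The left end of the component of `Sᶜ` containing `z`; it is `z` itself when `z ∈ S`, and the
junk value `0` when no point of `S` lies below `z`. -/
noncomputable def gapLeft (S : Set ℝ) (z : ℝ) : ℝ :=
  sSup (S ∩ Iic z)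

section gapLeft

variable {S : Set ℝ} {x z w : ℝ}

theorem gapLeft_mem (hS : IsClosed S) (hne : (S ∩ Iic z).Nonempty) : gapLeft S z ∈ S ∩ Iic z :=
  (hS.inter isClosed_Iic).csSup_mem hne (bddAbove_Iic.mono inter_subset_right)

theorem Ioc_gapLeft_subset_compl (S : Set ℝ) (z : ℝ) : Ioc (gapLeft S z) z ⊆ Sᶜ :=
  fun _ hw hwS => (le_csSup (bddAbove_Iic.mono inter_subset_right) ⟨hwS, hw.2⟩).not_gt hw.1

theorem gapLeft_eq_of_Ioc_subset_compl (hx : x ∈ S) (hxz : x ≤ z) (h : Ioc x z ⊆ Sᶜ) :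
    gapLeft S z = x :=
  IsGreatest.csSup_eq ⟨⟨hx, hxz⟩, fun _ hw => not_lt.1 fun hxw => h ⟨hxw, hw.2⟩ hw.1⟩

theorem gapLeft_lt (hS : IsClosed S) (hne : (S ∩ Iic z).Nonempty) (hz : z ∉ S) :
    gapLeft S z < z :=
  (gapLeft_mem hS hne).2.lt_of_ne fun h => hz (h ▸ (gapLeft_mem hS hne).1)

theorem gapLeft_eq_of_mem_Ioc (hS : IsClosed S) (hne : (S ∩ Iic z).Nonempty)
    (hw : w ∈ Ioc (gapLeft S z) z) : gapLeft S w = gapLeft S z :=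
  gapLeft_eq_of_Ioc_subset_compl (gapLeft_mem hS hne).1 hw.1.le
    ((Ioc_subset_Ioc_right hw.2).trans (Ioc_gapLeft_subset_compl S z))

theorem gapLeft_apply {φ : ℝ → ℝ} (hφ : StrictMono φ) (hφs : Surjective φ) (hS : IsClosed S)
    (hφS : φ ⁻¹' S = S) (hne : (S ∩ Iic z).Nonempty) : gapLeft S (φ z) = φ (gapLeft S z) := by
  obtain ⟨hmem, hle⟩ := gapLeft_mem hS hne
  refine gapLeft_eq_of_Ioc_subset_compl ((Set.ext_iff.1 hφS _).2 hmem) (hφ.monotone hle) ?_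
  rintro w ⟨h₁, h₂⟩ hwS
  obtain ⟨v, rfl⟩ := hφs w
  exact Ioc_gapLeft_subset_compl S z ⟨hφ.lt_iff_lt.1 h₁, hφ.le_iff_le.1 h₂⟩
    ((Set.ext_iff.1 hφS v).1 hwS)

end gapLeft

section CircleLift

variable {f : UnitAddCircle → UnitAddCircle} {F : ℝ → ℝ} {A : Set UnitAddCircle}

theorem exists_iterate_add_int_mem_Ioo (hf : Semiconj ((↑) : ℝ → UnitAddCircle) F f) {y : ℝ}
    (hy : Dense (range fun n : ℕ => f^[n] y)) {u v : ℝ} (huv : u < v) :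
    ∃ (n : ℕ) (k : ℤ), F^[n] y + k ∈ Ioo u v := by
  obtain ⟨_, ⟨n, rfl⟩, w, hw, hwy : (w : UnitAddCircle) = f^[n] y⟩ :=
    hy.exists_mem_open (QuotientAddGroup.isOpenMap_coe _ isOpen_Ioo) ((nonempty_Ioo.2 huv).image _)
  rw [← hf.iterate_right n y] at hwy
  obtain ⟨k, rfl⟩ := UnitAddCircle.coe_eq_coe_iff.1 hwy.symm
  exact ⟨n, k, hw⟩

theorem preimage_coe_inter_Iic_nonempty (hA : A.Nonempty) (z : ℝ) :
    ((↑) ⁻¹' A ∩ Iic z : Set ℝ).Nonempty := by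
  obtain ⟨a, ha⟩ := hA
  obtain ⟨s, rfl⟩ := QuotientAddGroup.mk_surjective a
  refine ⟨s + (-⌈s - z⌉ : ℤ), ?_, ?_⟩
  · rwa [mem_preimage, UnitAddCircle.coe_add_int]
  · have := Int.le_ceil (s - z)
    simp only [Int.cast_neg, mem_Iic]
    linarith

theorem gapLeft_preimage_coe_add_int (hA : IsClosed A) (hAne : A.Nonempty) (z : ℝ) (k : ℤ) :
    gapLeft ((↑) ⁻¹' A) (z + k) = gapLeft ((↑) ⁻¹' A) z + k :=
  gapLeft_apply (strictMono_id.add_const _) (add_right_surjective _)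
    (hA.preimage continuous_quotient_mk') (by ext; simp)
    (preimage_coe_inter_Iic_nonempty hAne z)

theorem gapLeft_preimage_coe_apply (hFm : StrictMono F) (hFs : Surjective F)
    (hf : Semiconj ((↑) : ℝ → UnitAddCircle) F f) (hA : IsClosed A) (hAne : A.Nonempty)
    (hAinv : f ⁻¹' A = A) (z : ℝ) :
    gapLeft ((↑) ⁻¹' A) (F z) = F (gapLeft ((↑) ⁻¹' A) z) :=
  gapLeft_apply hFm hFs (hA.preimage continuous_quotient_mk')
    (by rw [← preimage_comp, hf.comp_eq, preimage_comp, hAinv])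
    (preimage_coe_inter_Iic_nonempty hAne z)

theorem exists_coe_gapLeft_eq_iterate (hFm : StrictMono F) (hFs : Surjective F)
    (hf : Semiconj ((↑) : ℝ → UnitAddCircle) F f) (hA : IsClosed A) (hAne : A.Nonempty)
    (hAinv : f ⁻¹' A = A) {y : ℝ} (hy : Dense (range fun n : ℕ => f^[n] y)) {z : ℝ}
    (hz : (z : UnitAddCircle) ∉ A) :
    ∃ n : ℕ, (gapLeft ((↑) ⁻¹' A) z : UnitAddCircle) = f^[n] (gapLeft ((↑) ⁻¹' A) y) := by
  have hS : IsClosed ((↑) ⁻¹' A : Set ℝ) := hA.preimage continuous_quotient_mk'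
  have hne := preimage_coe_inter_Iic_nonempty hAne z
  obtain ⟨n, k, hw⟩ := exists_iterate_add_int_mem_Ioo hf hy (gapLeft_lt hS hne hz)
  have hAinvn : f^[n] ⁻¹' A = A := by rw [preimage_iterate_eq]; exact iterate_fixed hAinv n
  refine ⟨n, ?_⟩
  rw [← gapLeft_eq_of_mem_Ioc hS hne (Ioo_subset_Ioc_self hw), gapLeft_preimage_coe_add_int hA hAne,
    gapLeft_preimage_coe_apply (hFm.iterate n) (hFs.iterate n) (hf.iterate_right n) hA hAne hAinvn,
    UnitAddCircle.coe_add_int, hf.iterate_right n]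

end CircleLift

theorem eq_univ_of_preimage_eq_self {f : UnitAddCircle → UnitAddCircle} {F : ℝ → ℝ}
    (hFm : StrictMono F) (hFs : Surjective F) {d : ℤ} (hdeg : ∀ x, F (x + 1) = F x + d)
    (hd : 2 ≤ d) (hf : Semiconj ((↑) : ℝ → UnitAddCircle) F f) {y : UnitAddCircle}
    (hy : Dense (range fun n : ℕ => f^[n] y)) {A : Set UnitAddCircle} (hA : IsClosed A)
    (hAne : A.Nonempty) (hAinv : f ⁻¹' A = A) : A = univ := by
  obtain ⟨y, rfl⟩ := QuotientAddGroup.mk_surjective y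
  by_contra hAuniv
  have hAf : MapsTo f A A := fun p hp => (Set.ext_iff.1 hAinv p).2 hp
  have hyA : (y : UnitAddCircle) ∉ A := fun hyA => hAuniv <| eq_univ_of_univ_subset <|
    hy.closure_eq ▸ closure_minimal (range_subset_iff.2 fun n => hAf.iterate n hyA) hA
  have hnotMem {z : ℝ} (k : ℤ) (hz : F z = y + k) : (z : UnitAddCircle) ∉ A := fun h =>
    hyA (by rw [← UnitAddCircle.coe_add_int y k, ← hz, hf]; exact hAf h)
  set S : Set ℝ := (↑) ⁻¹' A
  obtain ⟨z₁, hz₁⟩ := hFs y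
  obtain ⟨z₂, hz₂⟩ := hFs (y + 1)
  have hF₁ : F (gapLeft S z₁) = gapLeft S y := by
    rw [← gapLeft_preimage_coe_apply hFm hFs hf hA hAne hAinv, hz₁]
  have hF₂ : F (gapLeft S z₂) = gapLeft S y + 1 := by
    rw [← gapLeft_preimage_coe_apply hFm hFs hf hA hAne hAinv, hz₂]
    exact_mod_cast gapLeft_preimage_coe_add_int hA hAne y 1
  obtain ⟨m₁, hm₁⟩ :=
    exists_coe_gapLeft_eq_iterate hFm hFs hf hA hAne hAinv hy (hnotMem 0 (by simpa using hz₁))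
  obtain ⟨m₂, hm₂⟩ :=
    exists_coe_gapLeft_eq_iterate hFm hFs hf hA hAne hAinv hy (hnotMem 1 (by simpa using hz₂))
  obtain ⟨k, hk⟩ := UnitAddCircle.coe_eq_coe_iff.1 <|
    eq_of_iterate_eq_of_map_eq hm₁.symm hm₂.symm (by rw [← hf, hF₁])
      (by rw [← hf, hF₂]; exact_mod_cast UnitAddCircle.coe_add_int _ 1)
  have hkd : (k : ℝ) * d = 1 := by
    have := map_add_int_of_map_add_one hdeg (gapLeft S z₁) k
    rw [← hk, hF₁, hF₂] at this
    linarith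
  have hkd' : k * d = 1 := by exact_mod_cast hkd
  rcases le_or_gt k 0 with hk0 | hk0 <;> nlinarith

theorem iUnion_image_iterate_coe_Ioo_eq_univ {f : UnitAddCircle → UnitAddCircle} {F : ℝ → ℝ}
    (hFc : Continuous F) (hFm : StrictMono F) {d : ℤ} (hdeg : ∀ x, F (x + 1) = F x + d)
    (hd : 2 ≤ d) (hf : Semiconj ((↑) : ℝ → UnitAddCircle) F f) {y : UnitAddCircle}
    (hy : Dense (range fun n : ℕ => f^[n] y)) {a b : ℝ} (hab : a < b) :
    ⋃ n, f^[n] '' ((↑) '' Ioo a b) = univ := by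
  have hFs : Surjective F :=
    surjective_of_map_add_one hFc hdeg (by exact_mod_cast (by omega : 0 < d))
  exact iUnion_image_iterate_eq_univ
    (hf.continuous_right (QuotientAddGroup.isQuotientMap_mk _) hFc)
    (hf.isOpenMap_right QuotientAddGroup.mk_surjective continuous_quotient_mk'
      QuotientAddGroup.isOpenMap_coe (hFm.orderIsoOfSurjective F hFs).toHomeomorph.isOpenMap)
    (hf.surjective_right QuotientAddGroup.mk_surjective hFs)
    (fun A hA hAne hAinv => eq_univ_of_preimage_eq_self hFm hFs hdeg hd hf hy hA hAne hAinv)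
    (QuotientAddGroup.isOpenMap_coe _ isOpen_Ioo) ((nonempty_Ioo.2 hab).image _)

theorem continuous_iterate_add_const_apply {F : ℝ → ℝ} (hFc : Continuous F) (x : ℝ) (n : ℕ) :
    Continuous fun t => (fun w => F w + t)^[n] x := by
  induction n with
  | zero => exact continuous_const
  | succ n ih =>
    simp only [iterate_succ_apply']
    exact (hFc.comp ih).add continuous_id

theorem exists_iterate_add_const_eq {F : ℝ → ℝ} (hFc : Continuous F) (hFm : StrictMono F)
    {x z ε : ℝ} (hε : 0 < ε) (hz : z ∈ Ioo (F x) (F x + ε)) (n : ℕ) :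
    ∃ t ∈ Ioo 0 ε, (fun w => F w + t)^[n + 1] x = F^[n] z := by
  have h₀ : (fun w => F w + 0)^[n + 1] x = F^[n] (F x) := by simp [iterate_succ_apply]
  have hε' : F^[n] (F x + ε) ≤ (fun w => F w + ε)^[n + 1] x := by
    rw [iterate_succ_apply]
    exact hFm.monotone.iterate_le_of_le (fun w => le_add_of_nonneg_right hε.le) n _
  exact intermediate_value_Ioo hε.le (continuous_iterate_add_const_apply hFc x (n + 1)).continuousOn
    ⟨h₀ ▸ hFm.iterate n hz.1, hε'.trans_lt' (hFm.iterate n hz.2)⟩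

/-- Let `f` be a transitive orientation-preserving non-invertible local
homeomorphism of the circle with strictly increasing lift `F` of degree `d ≥ 2`, and let
`f_t` be the circle map lifted by `F_t = F + t`. Then for every `ε > 0` and every `x` there
are `n > 0` and `0 < t < ε` with `f_tⁿ(x) = x`. -/
theorem perturbed_map_has_periodic_point
    (f : AddCircle (1 : ℝ) → AddCircle (1 : ℝ))
    (F : ℝ → ℝ) (hFc : Continuous F) (hFm : StrictMono F)
    (d : ℤ) (hd : 2 ≤ d) (hdeg : ∀ x : ℝ, F (x + 1) = F x + d)
    (hlift : ∀ x : ℝ, f (x : AddCircle (1 : ℝ)) = (F x : AddCircle (1 : ℝ)))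
    (htrans : ∃ x₀, Dense (Set.range fun n : ℕ => f^[n] x₀))
    (ft : ℝ → AddCircle (1 : ℝ) → AddCircle (1 : ℝ))
    (hft : ∀ (t : ℝ) (x : ℝ), ft t (x : AddCircle (1 : ℝ)) = ((F x + t : ℝ) : AddCircle (1 : ℝ))) :
    ∀ ε > (0 : ℝ), ∀ x : AddCircle (1 : ℝ),
      ∃ n : ℕ, 0 < n ∧ ∃ t : ℝ, 0 < t ∧ t < ε ∧ (ft t)^[n] x = x := by
  intro ε hε x
  obtain ⟨x, rfl⟩ := QuotientAddGroup.mk_surjective x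
  obtain ⟨y, hy⟩ := htrans
  have hf : Semiconj ((↑) : ℝ → UnitAddCircle) F f := fun w => (hlift w).symm
  have hcover := iUnion_image_iterate_coe_Ioo_eq_univ hFc hFm hdeg hd hf hy
    (lt_add_of_pos_right (F x) hε)
  obtain ⟨n, _, ⟨z, hz, rfl⟩, hzx⟩ := mem_iUnion.1 (hcover.symm ▸ mem_univ (x : UnitAddCircle))
  obtain ⟨t, ht, hteq⟩ := exists_iterate_add_const_eq hFc hFm hε hz n
  have hft' : Semiconj ((↑) : ℝ → UnitAddCircle) (fun w => F w + t) (ft t) :=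
    fun w => (hft t w).symm
  refine ⟨n + 1, n.succ_pos, t, ht.1, ht.2, ?_⟩
  rw [← hft'.iterate_right, hteq, hf.iterate_right, hzx]
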